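/- arXiv:1205.3148 — 7 statements merged into one kernel-verified Lean document; each statement's English description precedes it below -/
import Mathlib

section
/- If x·u = 0 for some u in A, and x is superficial for the filtration 𝔉 with grade(I₁) ≥ 1 (i.e., I₁ contains a regular element), and ⋂ₙ Iₙ = 0, then u = 0; that is, a superficial element for a Noetherian filtration in a ring where I₁ has positive grade is a regular element of A. -/
/-- A superficial element for a Noetherian separated filtration, when `I 1` has
positive grade, is a regular element of `A`. -/
theorem superficial_is_regular {A : Type*} [CommRing A] [IsNoetherianRing A] [IsLocalRing A]
    (I : ℕ → Ideal A)
    (hI0 : I 0 = ⊤) (hmono : ∀ n, I (n + 1) ≤ I n) (hI1 : I 1 ≠ ⊤)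
    (hmul : ∀ i j, I i * I j ≤ I (i + j))
    (hsep : (⨅ n, I n) = ⊥)
    (x : A) (hx : x ∈ I 1)
    (hsup : ∃ c : ℕ, ∀ n ≥ c, (I (n + 1)).colon (Ideal.span {x}) ⊓ I c = I n)
    (hgrade : ∃ y ∈ I 1, ∀ u : A, y * u = 0 → u = 0) :
    ∀ u : A, x * u = 0 → u = 0 := by
  obtain ⟨c, hc⟩ := hsup
  obtain ⟨y, hy, hyreg⟩ := hgrade
  -- monotonicity: I m ≤ I n for n ≤ m
  have hmono' : ∀ {n m : ℕ}, n ≤ m → I m ≤ I n := by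
    intro n m h
    induction m with
    | zero => simp_all
    | succ k ih =>
      rcases Nat.eq_or_lt_of_le h with h' | h'
      · exact h' ▸ le_refl _
      · exact le_trans (hmono k) (ih (Nat.lt_succ_iff.mp h'))
  -- powers of y lie in the filtration
  have hpow : ∀ k : ℕ, y ^ k ∈ I k := by
    intro k
    induction k with
    | zero => simp [hI0]
    | succ k ih =>
      have := hmul 1 k (Ideal.mul_mem_mul hy ih)
      simpa [pow_succ, mul_comm, add_comm] using this
  intro u hu
  -- y^c * u ∈ (0 : x) ∩ I c, hence in every I n, hence 0
  have key : y ^ c * u = 0 := by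
    have hIc : y ^ c * u ∈ I c := Ideal.mul_mem_right u _ (hpow c)
    have hall : y ^ c * u ∈ ⨅ n, I n := by
      refine Submodule.mem_iInf _ |>.mpr fun n => ?_
      rcases le_or_gt c n with h | h
      · have : y ^ c * u ∈ (I (n + 1)).colon (Ideal.span {x}) := by
          rw [Ideal.mem_colon_span_singleton]
          have hz : y ^ c * u * x = 0 := by linear_combination y ^ c * hu
          rw [hz]; exact (I (n + 1)).zero_mem
        have := hc n h
        rw [← this]
        exact ⟨‹_›, hIc⟩
      · exact hmono' h.le hIc
    rw [hsep] at hall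
    exact hall
  -- cancel y^c
  have cancel : ∀ (k : ℕ) (v : A), y ^ k * v = 0 → v = 0 := by
    intro k
    induction k with
    | zero => intro v h; simpa using h
    | succ m ihm =>
      intro v h
      apply ihm
      apply hyreg
      rw [← mul_assoc, ← pow_succ']; exact h
  exact cancel c u key
end

section
/- Let v₁, ..., v_t ∈ I₁ be analytically independent in the good filtration 𝔉, and let J = (v₁, ..., v_t). Then J^h ∩ I_h·𝔪 = J^h·𝔪 for all h ∈ ℕ. -/
/-- If `v 0, ..., v (t-1) ∈ I 1` are analytically independent in the good filtration `I`
and `J` is the ideal they generate, then `J ^ h ⊓ (I h * 𝔪) = J ^ h * 𝔪` for all `h`. -/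
theorem analytically_independent_inter {A : Type*} [CommRing A] [IsNoetherianRing A]
    [IsLocalRing A]
    (I : ℕ → Ideal A)
    (hI0 : I 0 = ⊤) (hmono : ∀ n, I (n + 1) ≤ I n) (hI1 : I 1 ≠ ⊤)
    (hmul : ∀ i j, I i * I j ≤ I (i + j))
    (hgood : ∃ N, ∀ n ≥ N, I (n + 1) = I 1 * I n)
    (t : ℕ) (v : Fin t → A) (hv : ∀ i, v i ∈ I 1)
    (hAI : ∀ (h : ℕ) (f : MvPolynomial (Fin t) A), f.IsHomogeneous h →
      MvPolynomial.eval v f ∈ I h * IsLocalRing.maximalIdeal A →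
      ∀ d, f.coeff d ∈ IsLocalRing.maximalIdeal A) :
    ∀ h : ℕ,
      (Ideal.span (Set.range v)) ^ h ⊓ (I h * IsLocalRing.maximalIdeal A)
        = (Ideal.span (Set.range v)) ^ h * IsLocalRing.maximalIdeal A := by
  set J := Ideal.span (Set.range v) with hJ
  set m := IsLocalRing.maximalIdeal A with hm
  -- J ≤ I 1
  have hJI : J ≤ I 1 := Ideal.span_le.mpr (by rintro x ⟨i, rfl⟩; exact hv i)
  -- J^h ≤ I h
  have hJh : ∀ h : ℕ, J ^ h ≤ I h := by
    intro h
    induction h with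
    | zero => simp [hI0]
    | succ n ih =>
      calc J ^ (n + 1) = J * J ^ n := pow_succ' J n
        _ ≤ I 1 * I n := Ideal.mul_mono hJI ih
        _ ≤ I (1 + n) := hmul 1 n
        _ = I (n + 1) := by rw [Nat.add_comm]
  -- elements of J are evaluations of homogeneous polynomials of degree 1
  have hdeg1 : ∀ a ∈ J, ∃ g : MvPolynomial (Fin t) A, g.IsHomogeneous 1 ∧
      MvPolynomial.eval v g = a := by
    intro a ha
    obtain ⟨c, hc⟩ := (Submodule.mem_span_range_iff_exists_fun A).mp ha
    refine ⟨∑ i, MvPolynomial.C (c i) * MvPolynomial.X i, ?_, ?_⟩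
    · exact MvPolynomial.IsHomogeneous.sum _ _ _ fun i _ =>
        MvPolynomial.isHomogeneous_C_mul_X _ _
    · rw [map_sum, ← hc]
      simp [smul_eq_mul]
  -- elements of J^h are evaluations of homogeneous polynomials of degree h
  have hdegh : ∀ h : ℕ, ∀ x ∈ J ^ h, ∃ f : MvPolynomial (Fin t) A, f.IsHomogeneous h ∧
      MvPolynomial.eval v f = x := by
    intro h
    induction h with
    | zero =>
      intro x _
      exact ⟨MvPolynomial.C x, MvPolynomial.isHomogeneous_C _ _, MvPolynomial.eval_C x⟩
    | succ n ih =>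
      intro x hx
      rw [pow_succ] at hx
      refine Submodule.mul_induction_on hx ?_ ?_
      · intro a ha b hb
        obtain ⟨f, hf, hfe⟩ := ih a ha
        obtain ⟨g, hg, hge⟩ := hdeg1 b hb
        exact ⟨f * g, hf.mul hg, by rw [map_mul, hfe, hge]⟩
      · rintro a b ⟨f, hf, hfe⟩ ⟨g, hg, hge⟩
        exact ⟨f + g, hf.add hg, by rw [map_add, hfe, hge]⟩
  intro h
  apply le_antisymm
  · rintro x ⟨hx1, hx2⟩
    obtain ⟨f, hf, hfe⟩ := hdegh h x hx1
    have hc : ∀ d, f.coeff d ∈ m := hAI h f hf (hfe ▸ hx2)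
    rw [← hfe, MvPolynomial.eval_eq' v f]
    apply Ideal.sum_mem
    intro d hd
    rw [mul_comm (f.coeff d)]
    apply Ideal.mul_mem_mul _ (hc d)
    have hdd : d.degree = h := by
      by_contra hne
      exact MvPolynomial.mem_support_iff.mp hd (hf.coeff_eq_zero hne)
    have hds : ∑ i, d i = h := by
      rw [← hdd, Finsupp.degree]
      exact (Finset.sum_subset (Finset.subset_univ _)
        (fun i _ hi => Finsupp.notMem_support_iff.mp hi)).symm
    rw [← hds, ← Finset.prod_pow_eq_pow_sum]
    exact Ideal.prod_mem_prod fun i _ => Ideal.pow_mem_pow (Ideal.subset_span (Set.mem_range_self i)) _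
  · exact le_inf Ideal.mul_le_left (Ideal.mul_mono (hJh h) le_rfl)
end

section
/- Let a ∈ A be a regular element and Iₙ, I_i ideals with a^{n−i}I_i ⊆ Iₙ and all relevant quotients of finite length. Then λ(Iₙ/(𝔪Iₙ + a^{n−i}I_i)) = μ(Iₙ) − μ(I_i) + λ((a^{n−i}I_i ∩ 𝔪Iₙ)/a^{n−i}𝔪I_i). -/
/-- The length of the subquotient `P/(P ⊓ Q)` of `A`, as the Krull dimension of its
lattice of submodules. -/
noncomputable def qlen (A : Type*) [CommRing A] (P Q : Submodule A A) : WithBot ℕ∞ :=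
  Order.krullDim (Submodule A (↥P ⧸ Submodule.comap P.subtype Q))

open Order

section OrderAux

variable {β γ : Type*} [PartialOrder β] [PartialOrder γ]

lemma aux_height_add_one_le {x y : β} (h : x < y) :
    Order.height x + 1 ≤ Order.height y := by
  rw [Order.height_eq_iSup_lt_height y]
  exact le_iSup₂_of_le x h le_rfl

lemma aux_prod_len (p : LTSeries (β × γ)) :
    (p.length : ℕ∞) ≤ Order.height p.last.1 + Order.height p.last.2 := by
  obtain ⟨n, hn⟩ : ∃ n, p.length = n := ⟨_, rfl⟩
  induction n generalizing p with
  | zero => simp [hn]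
  | succ n ih =>
    have hpos : p.length ≠ 0 := by omega
    have hql : p.eraseLast.length = n := by simp [hn]
    have hrel : p.eraseLast.last < p.last := p.eraseLast_last_rel_last hpos
    have hih := ih p.eraseLast hql
    have step : Order.height p.eraseLast.last.1 + Order.height p.eraseLast.last.2 + 1
        ≤ Order.height p.last.1 + Order.height p.last.2 := by
      rcases Prod.lt_iff.mp hrel with ⟨h1, h2⟩ | ⟨h1, h2⟩
      · calc Order.height p.eraseLast.last.1 + Order.height p.eraseLast.last.2 + 1
            = (Order.height p.eraseLast.last.1 + 1) + Order.height p.eraseLast.last.2 := by ring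
          _ ≤ Order.height p.last.1 + Order.height p.last.2 :=
            add_le_add (aux_height_add_one_le h1) (Order.height_mono h2)
      · calc Order.height p.eraseLast.last.1 + Order.height p.eraseLast.last.2 + 1
            = Order.height p.eraseLast.last.1 + (Order.height p.eraseLast.last.2 + 1) := by ring
          _ ≤ Order.height p.last.1 + Order.height p.last.2 :=
            add_le_add (Order.height_mono h1) (aux_height_add_one_le h2)
    rw [hn]
    calc ((n + 1 : ℕ) : ℕ∞) = (n : ℕ∞) + 1 := by push_cast; ring
      _ ≤ Order.height p.eraseLast.last.1 + Order.height p.eraseLast.last.2 + 1 := by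
          exact add_le_add_left (hql ▸ hih) 1
      _ ≤ _ := step

lemma aux_krullDim_prod_le :
    krullDim (β × γ) ≤ krullDim β + krullDim γ := by
  rcases isEmpty_or_nonempty (β × γ) with h | h
  · rw [krullDim_eq_bot]; exact bot_le
  · have hb : Nonempty β := ⟨h.some.1⟩
    have hg : Nonempty γ := ⟨h.some.2⟩
    refine iSup_le fun p => ?_
    calc (p.length : WithBot ℕ∞)
        ≤ ((Order.height p.last.1 + Order.height p.last.2 : ℕ∞) : WithBot ℕ∞) := by
          exact_mod_cast aux_prod_len p
      _ = ((Order.height p.last.1 : ℕ∞) : WithBot ℕ∞)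
            + ((Order.height p.last.2 : ℕ∞) : WithBot ℕ∞) := by push_cast; rfl
      _ ≤ krullDim β + krullDim γ :=
          add_le_add (Order.height_le_krullDim _) (Order.height_le_krullDim _)

end OrderAux

section ModularAux

variable {α : Type*} [Lattice α] [IsModularLattice α]

lemma aux_icc_le {N K P : α} (hNK : N ≤ K) (hKP : K ≤ P) :
    krullDim (Set.Icc N P) ≤ krullDim (Set.Icc K P) + krullDim (Set.Icc N K) := by
  have hf : StrictMono (fun x : Set.Icc N P =>
      ((⟨x.1 ⊔ K, le_sup_right, sup_le x.2.2 hKP⟩, ⟨x.1 ⊓ K, le_inf x.2.1 hNK, inf_le_right⟩) :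
        Set.Icc K P × Set.Icc N K)) := by
    intro x y hxy
    have hlt : x.1 < y.1 := hxy
    refine lt_of_le_of_ne ⟨?_, ?_⟩ ?_
    · exact Subtype.mk_le_mk.mpr (sup_le_sup_right hlt.le K)
    · exact Subtype.mk_le_mk.mpr (inf_le_inf_right K hlt.le)
    · intro hEq
      have h1 : x.1 ⊔ K = y.1 ⊔ K := congrArg (fun z => (z.1 : α)) hEq
      have h2 : x.1 ⊓ K = y.1 ⊓ K := congrArg (fun z => (z.2 : α)) hEq
      have : y.1 = x.1 := by
        calc y.1 = (y.1 ⊔ K) ⊓ y.1 := (inf_eq_right.mpr le_sup_left).symm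
          _ = (x.1 ⊔ K) ⊓ y.1 := by rw [h1]
          _ = x.1 ⊔ (K ⊓ y.1) := sup_inf_assoc_of_le K hlt.le
          _ = x.1 := by
              rw [sup_eq_left, inf_comm, ← h2]
              exact inf_le_left
      exact absurd this.symm (ne_of_lt hlt)
  exact (krullDim_le_of_strictMono _ hf).trans aux_krullDim_prod_le

lemma aux_icc_ge {N K P : α} (hNK : N ≤ K) (hKP : K ≤ P) :
    krullDim (Set.Icc K P) + krullDim (Set.Icc N K) ≤ krullDim (Set.Icc N P) := by
  have n1 : Nonempty (Set.Icc K P) := ⟨⟨K, le_refl K, hKP⟩⟩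
  have n2 : Nonempty (Set.Icc N K) := ⟨⟨K, hNK, le_refl K⟩⟩
  have n3 : Nonempty (Set.Icc N P) := ⟨⟨K, hNK, hKP⟩⟩
  rw [krullDim_eq_iSup_length, krullDim_eq_iSup_length, krullDim_eq_iSup_length,
    ← WithBot.coe_add, WithBot.coe_le_coe, ENat.iSup_add]
  refine iSup_le fun p => ?_
  rw [ENat.add_iSup]
  refine iSup_le fun q => ?_
  have he1 : StrictMono (fun x : Set.Icc K P => (⟨x.1, hNK.trans x.2.1, x.2.2⟩ : Set.Icc N P)) :=
    fun x y h => h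
  have he2 : StrictMono (fun x : Set.Icc N K => (⟨x.1, x.2.1, x.2.2.trans hKP⟩ : Set.Icc N P)) :=
    fun x y h => h
  set p' := p.map _ he1 with hp'
  set q' := q.map _ he2 with hq'
  have hle : q'.last ≤ p'.head := by
    show (q.last.1 : α) ≤ p.head.1
    exact q.last.2.2.trans p.head.2.1
  rcases eq_or_lt_of_le hle with hEq | hLt
  · refine le_iSup_of_le (q'.smash p' hEq) ?_
    have : (q'.smash p' hEq).length = q.length + p.length := rfl
    rw [this]
    push_cast
    rw [add_comm]
  · refine le_iSup_of_le (q'.append p' hLt) ?_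
    have : (q'.append p' hLt).length = q.length + p.length + 1 := rfl
    rw [this]
    push_cast
    calc (p.length : ℕ∞) + q.length ≤ (q.length : ℕ∞) + p.length + 1 := by
          rw [add_comm (p.length : ℕ∞)]; exact le_self_add
      _ = _ := by ring

lemma aux_krullDim_Icc_add {N K P : α} (hNK : N ≤ K) (hKP : K ≤ P) :
    krullDim (Set.Icc N P) = krullDim (Set.Icc K P) + krullDim (Set.Icc N K) :=
  le_antisymm (aux_icc_le hNK hKP) (aux_icc_ge hNK hKP)

end ModularAux

section ModuleAux

variable {R M M' : Type*} [CommRing R] [AddCommGroup M] [Module R M]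
  [AddCommGroup M'] [Module R M']

/-- Mapping an interval of submodules along an injective linear map. -/
noncomputable def auxIccMap (f : M →ₗ[R] M') (hf : Function.Injective f)
    (X Y : Submodule R M) :
    Set.Icc X Y ≃o Set.Icc (X.map f) (Y.map f) where
  toFun z := ⟨z.1.map f, Submodule.map_mono z.2.1, Submodule.map_mono z.2.2⟩
  invFun w := ⟨w.1.comap f,
    (le_of_eq (Submodule.comap_map_eq_of_injective hf X).symm).trans (Submodule.comap_mono w.2.1),
    (Submodule.comap_mono w.2.2).trans (le_of_eq (Submodule.comap_map_eq_of_injective hf Y))⟩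
  left_inv z := Subtype.ext (Submodule.comap_map_eq_of_injective hf z.1)
  right_inv w := Subtype.ext (by
    show Submodule.map f (Submodule.comap f w.1) = w.1
    rw [Submodule.map_comap_eq]
    exact inf_eq_right.mpr (w.2.2.trans LinearMap.map_le_range))
  map_rel_iff' {z z'} := by
    constructor
    · intro h
      have h' : z.1.map f ≤ z'.1.map f := h
      show z.1 ≤ z'.1
      rw [← Submodule.comap_map_eq_of_injective hf z.1,
        ← Submodule.comap_map_eq_of_injective hf z'.1]
      exact Submodule.comap_mono h'
    · intro h
      show z.1.map f ≤ z'.1.map f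
      exact Submodule.map_mono h

/-- The subtype `{p' // N ≤ p'}` is the interval `Icc N ⊤`. -/
def auxIciIccTop (N : Submodule R M) :
    {p' : Submodule R M // N ≤ p'} ≃o Set.Icc N (⊤ : Submodule R M) where
  toFun x := ⟨x.1, x.2, le_top⟩
  invFun x := ⟨x.1, x.2.1⟩
  left_inv x := rfl
  right_inv x := rfl
  map_rel_iff' := Iff.rfl

end ModuleAux

lemma qlen_eq_icc {A : Type*} [CommRing A] (P Q : Submodule A A) :
    qlen A P Q = Order.krullDim (Set.Icc (P ⊓ Q) P) := by
  have e1 := Submodule.comapMkQRelIso (Submodule.comap P.subtype Q)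
  have e2 := auxIciIccTop (Submodule.comap P.subtype Q)
  have e3 := auxIccMap P.subtype P.injective_subtype (Submodule.comap P.subtype Q)
    (⊤ : Submodule A P)
  have h1 : (Submodule.comap P.subtype Q).map P.subtype = P ⊓ Q :=
    Submodule.map_comap_subtype P Q
  have h2 : (⊤ : Submodule A P).map P.subtype = P := Submodule.map_subtype_top P
  rw [qlen, Order.krullDim_eq_of_orderIso (e1.trans (e2.trans e3)), h1, h2]

lemma aux_span_mul_eq_map {A : Type*} [CommRing A] (b : A) (X : Ideal A) :
    Ideal.span {b} * X = Submodule.map (LinearMap.lsmul A A b) X := by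
  ext x
  rw [Ideal.mem_span_singleton_mul]
  simp [Submodule.mem_map, smul_eq_mul]

/-- `λ(I n/(𝔪 I n + a^(n-i) I i)) = μ(I n) - μ(I i) + λ((a^(n-i) I i ⊓ 𝔪 I n)/a^(n-i) 𝔪 I i)`,
stated additively. -/
theorem length_formula_superficial {A : Type*} [CommRing A] [IsNoetherianRing A]
    [IsLocalRing A]
    (I : ℕ → Ideal A) (n i : ℕ) (hi : i < n) (a : A)
    (hreg : ∀ u : A, a * u = 0 → u = 0)
    (hsub : Ideal.span {a ^ (n - i)} * I i ≤ I n)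
    (hfin1 : qlen A (I n) (IsLocalRing.maximalIdeal A * I n) ≠ ⊤)
    (hfin2 : qlen A (I i) (IsLocalRing.maximalIdeal A * I i) ≠ ⊤)
    (hfin3 : qlen A (I n)
        (IsLocalRing.maximalIdeal A * I n ⊔ Ideal.span {a ^ (n - i)} * I i) ≠ ⊤)
    (hfin4 : qlen A (Ideal.span {a ^ (n - i)} * I i ⊓ IsLocalRing.maximalIdeal A * I n)
        (Ideal.span {a ^ (n - i)} * (IsLocalRing.maximalIdeal A * I i)) ≠ ⊤) :
    qlen A (I n) (IsLocalRing.maximalIdeal A * I n ⊔ Ideal.span {a ^ (n - i)} * I i)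
        + qlen A (I i) (IsLocalRing.maximalIdeal A * I i)
      = qlen A (I n) (IsLocalRing.maximalIdeal A * I n)
        + qlen A (Ideal.span {a ^ (n - i)} * I i ⊓ IsLocalRing.maximalIdeal A * I n)
            (Ideal.span {a ^ (n - i)} * (IsLocalRing.maximalIdeal A * I i)) := by
  set m := IsLocalRing.maximalIdeal A with hm
  set b := a ^ (n - i) with hb
  set B := Ideal.span {b} with hB
  have hpow : ∀ (k : ℕ) (u : A), a ^ k * u = 0 → u = 0 := by
    intro k
    induction k with
    | zero => intro u h; simpa using h
    | succ k ih =>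
      intro u h
      rw [pow_succ, mul_assoc] at h
      exact hreg u (ih (a * u) h)
  have hinj : Function.Injective (LinearMap.lsmul A A b) := by
    intro u v huv
    have huv' : b * u = b * v := huv
    have : b * (u - v) = 0 := by rw [mul_sub, huv', sub_self]
    have := hpow (n - i) (u - v) this
    exact sub_eq_zero.mp this
  have hmn : m * I n ≤ I n := Ideal.mul_le_right
  have hK : m * I n ⊔ B * I i ≤ I n := sup_le hmn hsub
  have hmi : m * I i ≤ I i := Ideal.mul_le_right
  have hBm1 : B * (m * I i) ≤ B * I i := Ideal.mul_mono_right Ideal.mul_le_right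
  have hBm2 : B * (m * I i) ≤ m * I n := by
    rw [mul_left_comm]
    exact Ideal.mul_mono_right hsub
  rw [qlen_eq_icc, qlen_eq_icc, qlen_eq_icc, qlen_eq_icc,
    inf_eq_right.mpr hK, inf_eq_right.mpr hmi, inf_eq_right.mpr hmn,
    inf_eq_right.mpr (le_inf hBm1 hBm2)]
  have E1 : Order.krullDim (Set.Icc (m * I n) (I n))
      = Order.krullDim (Set.Icc (m * I n ⊔ B * I i) (I n))
        + Order.krullDim (Set.Icc (m * I n) (m * I n ⊔ B * I i)) :=
    aux_krullDim_Icc_add le_sup_left hK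
  have E2 : Order.krullDim (Set.Icc (B * I i ⊓ m * I n) (B * I i))
      = Order.krullDim (Set.Icc (m * I n) (m * I n ⊔ B * I i)) := by
    have h := Order.krullDim_eq_of_orderIso (infIccOrderIsoIccSup (B * I i) (m * I n))
    rwa [sup_comm (B * I i) (m * I n)] at h
  have E3 : Order.krullDim (Set.Icc (m * I i) (I i))
      = Order.krullDim (Set.Icc (B * (m * I i)) (B * I i)) := by
    have h := Order.krullDim_eq_of_orderIso
      (auxIccMap (LinearMap.lsmul A A b) hinj (m * I i) (I i))
    rwa [← aux_span_mul_eq_map, ← aux_span_mul_eq_map] at h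
  have E4 : Order.krullDim (Set.Icc (B * (m * I i)) (B * I i))
      = Order.krullDim (Set.Icc (B * I i ⊓ m * I n) (B * I i))
        + Order.krullDim (Set.Icc (B * (m * I i)) (B * I i ⊓ m * I n)) :=
    aux_krullDim_Icc_add (le_inf hBm1 hBm2) inf_le_left
  rw [E3, E4, E2, E1, add_assoc]
end

section
/- Let a₁ ∈ I₁ be a regular element of A with (a₁) ∩ Iₙ = a₁I_{n−1} and a₁I_{n−1} ∩ 𝔪Iₙ = a₁𝔪I_{n−1} for all n. Then μ((Iₙ + (a₁))/(a₁)) = μ(Iₙ) − μ(I_{n−1}), where μ denotes minimal number of generators (over A and over A/(a₁), respectively). -/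
open Order

lemma krullDim_subtype_le {α : Type*} [Preorder α] (a : α) :
    Order.krullDim {x : α // x ≤ a} = (Order.height a : WithBot ℕ∞) := by
  have : Nonempty {x : α // x ≤ a} := ⟨⟨a, le_rfl⟩⟩
  rw [Order.krullDim_eq_iSup_length]
  congr 1
  apply le_antisymm
  · apply iSup_le
    intro p
    have h := Order.length_le_height (x := a)
      (p := p.map Subtype.val (fun _ _ h => h)) (by exact p.last.2)
    exact h
  · apply Order.height_le
    intro p hlast
    have hle : ∀ i, p i ≤ a := fun i => hlast ▸ p.monotone (Fin.le_last i)
    let q : LTSeries {x : α // x ≤ a} :=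
      ⟨p.length, fun i => ⟨p i, hle i⟩, fun i => p.step i⟩
    exact le_iSup_of_le q le_rfl

lemma krullDim_subtype_ge {α : Type*} [Preorder α] (a : α) :
    Order.krullDim {x : α // a ≤ x} = (Order.coheight a : WithBot ℕ∞) := by
  have : Nonempty {x : α // a ≤ x} := ⟨⟨a, le_rfl⟩⟩
  rw [Order.krullDim_eq_iSup_length]
  congr 1
  apply le_antisymm
  · apply iSup_le
    intro p
    have h := Order.length_le_coheight (x := a)
      (p := p.map Subtype.val (fun _ _ h => h)) (by exact p.head.2)
    exact h
  · apply Order.coheight_le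
    intro p hhead
    have hle : ∀ i, a ≤ p i := fun i => hhead ▸ p.monotone (Fin.zero_le i)
    let q : LTSeries {x : α // a ≤ x} :=
      ⟨p.length, fun i => ⟨p i, hle i⟩, fun i => p.step i⟩
    exact le_iSup_of_le q le_rfl


lemma krullDim_eq_height_add_coheight {α : Type*} [Lattice α] [IsModularLattice α] [Nonempty α]
    (hfin : Order.krullDim α ≠ ⊤) (a : α) :
    Order.krullDim α = ((Order.height a + Order.coheight a : ℕ∞) : WithBot ℕ∞) := by
  have hh : ∀ x : α, Order.height x < ⊤ := fun x => by
    by_contra h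
    simp only [not_lt, top_le_iff] at h
    have := Order.height_le_krullDim x
    rw [h] at this
    exact hfin (le_antisymm le_top (le_trans (by simp) this))
  have hc : ∀ x : α, Order.coheight x < ⊤ := fun x => by
    by_contra h
    simp only [not_lt, top_le_iff] at h
    have := Order.coheight_le_krullDim x
    rw [h] at this
    exact hfin (le_antisymm le_top (le_trans (by simp) this))
  apply le_antisymm
  · rw [Order.krullDim_eq_iSup_length, WithBot.coe_le_coe]
    apply iSup_le
    intro p
    have key : ∀ i : ℕ, ∀ hi : i ≤ p.length,
        (i : ℕ∞) + Order.height (p.head ⊓ a) + Order.coheight (p ⟨i, by omega⟩ ⊔ a)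
          ≤ Order.height (p ⟨i, by omega⟩ ⊓ a) + Order.coheight (p.head ⊔ a) := by
      intro i
      induction i with
      | zero =>
        intro hi
        have h0 : p ⟨0, by omega⟩ = p.head := rfl
        rw [h0]
        simp
      | succ i ih =>
        intro hi
        have hstep : p ⟨i, by omega⟩ < p ⟨i + 1, by omega⟩ := by
          have := p.step ⟨i, by omega⟩
          convert this using 2 <;> simp [Fin.castSucc, Fin.succ]
        have ih' := ih (by omega)
        by_cases hinf : p ⟨i, by omega⟩ ⊓ a < p ⟨i + 1, by omega⟩ ⊓ a
        · have h1 : Order.height (p ⟨i, by omega⟩ ⊓ a) + 1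
              ≤ Order.height (p ⟨i + 1, by omega⟩ ⊓ a) :=
            Order.add_one_le_of_lt (Order.height_strictMono hinf (hh _))
          have h2 : Order.coheight (p ⟨i + 1, by omega⟩ ⊔ a)
              ≤ Order.coheight (p ⟨i, by omega⟩ ⊔ a) :=
            Order.coheight_anti (sup_le_sup_right hstep.le a)
          calc ((i + 1 : ℕ) : ℕ∞) + Order.height (p.head ⊓ a)
                + Order.coheight (p ⟨i + 1, by omega⟩ ⊔ a)
              ≤ ((i : ℕ∞) + Order.height (p.head ⊓ a)
                + Order.coheight (p ⟨i, by omega⟩ ⊔ a)) + 1 := by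
                push_cast
                rw [show ((i : ℕ∞) + 1 + Order.height (p.head ⊓ a)
                  + Order.coheight (p ⟨i+1, by omega⟩ ⊔ a))
                  = ((i : ℕ∞) + Order.height (p.head ⊓ a)
                  + Order.coheight (p ⟨i+1, by omega⟩ ⊔ a)) + 1 by ring]
                gcongr
            _ ≤ (Order.height (p ⟨i, by omega⟩ ⊓ a) + Order.coheight (p.head ⊔ a)) + 1 := by
                gcongr
            _ = (Order.height (p ⟨i, by omega⟩ ⊓ a) + 1) + Order.coheight (p.head ⊔ a) := by ring
            _ ≤ _ := by gcongr
        · have hle : p ⟨i, by omega⟩ ⊓ a ≤ p ⟨i + 1, by omega⟩ ⊓ a :=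
            inf_le_inf_right a hstep.le
          have heq : p ⟨i, by omega⟩ ⊓ a = p ⟨i + 1, by omega⟩ ⊓ a :=
            hle.lt_or_eq.resolve_left hinf
          have hsup : p ⟨i, by omega⟩ ⊔ a < p ⟨i + 1, by omega⟩ ⊔ a :=
            sup_lt_sup_of_lt_of_inf_le_inf hstep heq.ge
          have h1 : Order.coheight (p ⟨i + 1, by omega⟩ ⊔ a) + 1
              ≤ Order.coheight (p ⟨i, by omega⟩ ⊔ a) :=
            Order.add_one_le_of_lt (Order.coheight_strictAnti hsup (hc _))
          calc ((i + 1 : ℕ) : ℕ∞) + Order.height (p.head ⊓ a)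
                + Order.coheight (p ⟨i + 1, by omega⟩ ⊔ a)
              = (i : ℕ∞) + Order.height (p.head ⊓ a)
                + (Order.coheight (p ⟨i + 1, by omega⟩ ⊔ a) + 1) := by push_cast; ring
            _ ≤ (i : ℕ∞) + Order.height (p.head ⊓ a)
                + Order.coheight (p ⟨i, by omega⟩ ⊔ a) := by gcongr
            _ ≤ Order.height (p ⟨i, by omega⟩ ⊓ a) + Order.coheight (p.head ⊔ a) := ih'
            _ ≤ _ := by rw [heq]
    have hlast := key p.length le_rfl
    have hend : p ⟨p.length, by omega⟩ = p.last := rfl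
    rw [hend] at hlast
    calc (p.length : ℕ∞) ≤ (p.length : ℕ∞) + Order.height (p.head ⊓ a)
          + Order.coheight (p.last ⊔ a) := by
          exact le_add_right (le_add_right le_rfl)
      _ ≤ Order.height (p.last ⊓ a) + Order.coheight (p.head ⊔ a) := hlast
      _ ≤ Order.height a + Order.coheight a :=
          add_le_add (Order.height_mono inf_le_right) (Order.coheight_anti le_sup_right)
  · rw [Order.krullDim_eq_iSup_height_add_coheight_of_nonempty, WithBot.coe_le_coe]
    exact le_iSup (fun x => Order.height x + Order.coheight x) a




lemma krullDim_submodule_add {R M : Type*} [Ring R] [AddCommGroup M] [Module R M]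
    (N : Submodule R M) (hfin : Order.krullDim (Submodule R M) ≠ ⊤) :
    Order.krullDim (Submodule R M)
      = Order.krullDim (Submodule R (M ⧸ N)) + Order.krullDim (Submodule R N) := by
  have h1 : Order.krullDim (Submodule R N) = (Order.height N : WithBot ℕ∞) := by
    rw [Order.krullDim_eq_of_orderIso (Submodule.MapSubtype.orderIso N), krullDim_subtype_le]
  have h2 : Order.krullDim (Submodule R (M ⧸ N)) = (Order.coheight N : WithBot ℕ∞) := by
    rw [Order.krullDim_eq_of_orderIso (Submodule.comapMkQRelIso N)]
    exact krullDim_subtype_ge N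
  rw [h1, h2, krullDim_eq_height_add_coheight hfin N, ← WithBot.coe_add, add_comm]

lemma qlen_congr {A : Type*} [CommRing A] {P Q P' Q' : Submodule A A}
    (e : (↥P ⧸ Submodule.comap P.subtype Q) ≃ₗ[A] (↥P' ⧸ Submodule.comap P'.subtype Q')) :
    qlen A P Q = qlen A P' Q' :=
  Order.krullDim_eq_of_orderIso (Submodule.orderIsoMapComap e)

lemma qlen_add {A : Type*} [CommRing A] {P Q S : Submodule A A} (hQS : Q ≤ S) (hSP : S ≤ P)
    (hfin : qlen A P Q ≠ ⊤) :
    qlen A P Q = qlen A P S + qlen A S Q := by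
  set Q' := Submodule.comap P.subtype Q with hQ'
  set S' := Submodule.comap P.subtype S with hS'
  have hQ'S' : Q' ≤ S' := fun x hx => hQS hx
  set N : Submodule A (↥P ⧸ Q') := S'.map Q'.mkQ with hN
  have e1 : ((↥P ⧸ Q') ⧸ N) ≃ₗ[A] (↥P ⧸ S') :=
    Submodule.quotientQuotientEquivQuotient Q' S' hQ'S'
  have e2 : ↥N ≃ₗ[A] (↥S ⧸ Submodule.comap S.subtype Q) := by
    have hker : LinearMap.ker (Q'.mkQ.comp S'.subtype) = Submodule.comap S'.subtype Q' := by
      rw [LinearMap.ker_comp, Submodule.ker_mkQ]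
    have hrange : LinearMap.range (Q'.mkQ.comp S'.subtype) = N := by
      rw [LinearMap.range_comp, Submodule.range_subtype]
    have eA : ↥N ≃ₗ[A] ↥(LinearMap.range (Q'.mkQ.comp S'.subtype)) :=
      LinearEquiv.ofEq _ _ hrange.symm
    have eB : (↥S' ⧸ LinearMap.ker (Q'.mkQ.comp S'.subtype))
        ≃ₗ[A] ↥(LinearMap.range (Q'.mkQ.comp S'.subtype)) :=
      (Q'.mkQ.comp S'.subtype).quotKerEquivRange
    have eD : (↥S' ⧸ LinearMap.ker (Q'.mkQ.comp S'.subtype))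
        ≃ₗ[A] (↥S' ⧸ Submodule.comap S'.subtype Q') :=
      Submodule.quotEquivOfEq _ _ hker
    have eC : (↥S' ⧸ Submodule.comap S'.subtype Q')
        ≃ₗ[A] (↥S ⧸ Submodule.comap S.subtype Q) := by
      refine Submodule.Quotient.equiv _ _ (Submodule.comapSubtypeEquivOfLe hSP) ?_
      ext ⟨y, hy⟩
      simp only [Submodule.mem_map, Submodule.mem_comap]
      constructor
      · rintro ⟨⟨⟨x, hxP⟩, hxS⟩, hxQ, hxy⟩
        have hval : x = y := congrArg Subtype.val hxy
        subst hval
        exact hxQ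
      · intro hyQ
        exact ⟨⟨⟨y, hSP hy⟩, hy⟩, hyQ, rfl⟩
    exact eA.trans (eB.symm.trans (eD.trans eC))
  have := krullDim_submodule_add N hfin
  rw [qlen, this, Order.krullDim_eq_of_orderIso (Submodule.orderIsoMapComap e1),
    Order.krullDim_eq_of_orderIso (Submodule.orderIsoMapComap e2)]
  rfl

lemma comap_subtype_eq_of_inf_eq {A : Type*} [CommRing A] {P Q Q' : Submodule A A}
    (h : P ⊓ Q = P ⊓ Q') :
    Submodule.comap P.subtype Q = Submodule.comap P.subtype Q' := by
  ext ⟨x, hx⟩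
  constructor
  · intro hxQ
    have : x ∈ P ⊓ Q := ⟨hx, hxQ⟩
    rw [h] at this
    exact this.2
  · intro hxQ'
    have : x ∈ P ⊓ Q' := ⟨hx, hxQ'⟩
    rw [← h] at this
    exact this.2

lemma qlen_eq_of_inf_eq {A : Type*} [CommRing A] {P Q Q' : Submodule A A}
    (h : P ⊓ Q = P ⊓ Q') : qlen A P Q = qlen A P Q' := by
  unfold qlen
  rw [comap_subtype_eq_of_inf_eq h]

/-- Noether: `qlen (p ⊔ p') p' = qlen p (p ⊓ p')`. -/
lemma qlen_sup {A : Type*} [CommRing A] (p p' : Submodule A A) :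
    qlen A (p ⊔ p') p' = qlen A p (p ⊓ p') := by
  have e := LinearMap.quotientInfEquivSupQuotient p p'
  rw [← Submodule.comap_inf] at e
  exact (qlen_congr e).symm

lemma qlen_map_injective {A : Type*} [CommRing A] (f : A →ₗ[A] A) (hf : Function.Injective f)
    {P Q : Submodule A A} (hQP : Q ≤ P) :
    qlen A (Submodule.map f P) (Submodule.map f Q) = qlen A P Q := by
  refine (qlen_congr ?_).symm
  refine Submodule.Quotient.equiv _ _ (Submodule.equivMapOfInjective f hf P) ?_
  ext ⟨y, hy⟩
  simp only [Submodule.mem_map, Submodule.mem_comap]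
  constructor
  · rintro ⟨⟨x, hxP⟩, hxQ, hxy⟩
    have hval : f x = y := congrArg Subtype.val hxy
    exact ⟨x, hxQ, hval⟩
  · rintro ⟨x, hxQ, hxy⟩
    refine ⟨⟨x, hQP hxQ⟩, hxQ, ?_⟩
    exact Subtype.ext hxy

lemma map_mulLeft_eq {A : Type*} [CommRing A] (a : A) (P : Submodule A A) :
    Submodule.map (LinearMap.mulLeft A a) P = Ideal.span {a} * P := by
  ext x
  simp only [Submodule.mem_map, LinearMap.mulLeft_apply, Ideal.mem_span_singleton_mul]

lemma qlen_smul {A : Type*} [CommRing A] (a : A) (hreg : ∀ u : A, a * u = 0 → u = 0)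
    {P Q : Submodule A A} (hQP : Q ≤ P) :
    qlen A (Ideal.span {a} * P) (Ideal.span {a} * Q) = qlen A P Q := by
  rw [← map_mulLeft_eq, ← map_mulLeft_eq]
  refine qlen_map_injective _ ?_ hQP
  intro x y hxy
  simp only [LinearMap.mulLeft_apply] at hxy
  have h0 : a * (x - y) = 0 := by rw [mul_sub, hxy, sub_self]
  exact sub_eq_zero.mp (hreg _ h0)
/-- When `algebraMap R S` is surjective, `S`-submodules and `R`-submodules of an `S`-module
coincide. -/
def restrictScalarsOrderIso (R : Type*) {S M : Type*} [CommSemiring R] [Semiring S] [Algebra R S]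
    [AddCommMonoid M] [Module R M] [Module S M] [IsScalarTower R S M]
    (hsur : Function.Surjective (algebraMap R S)) :
    Submodule S M ≃o Submodule R M where
  toFun p := p.restrictScalars R
  invFun p :=
    { carrier := p
      add_mem' := fun ha hb => p.add_mem ha hb
      zero_mem' := p.zero_mem
      smul_mem' := fun s x hx => by
        obtain ⟨r, rfl⟩ := hsur s
        rw [algebraMap_smul]
        exact p.smul_mem r hx }
  left_inv p := by ext x; rfl
  right_inv p := by ext x; rfl
  map_rel_iff' := Iff.rfl

lemma qlen_map_quotient {A : Type*} [CommRing A] (J P K : Ideal A) :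
    qlen (A ⧸ J) (P.map (Ideal.Quotient.mk J)) (K.map (Ideal.Quotient.mk J))
      = qlen A P (K ⊔ J) := by
  set π := Ideal.Quotient.mk J with hπ
  set Pb := P.map π with hPb
  set Kb : Submodule (A ⧸ J) ↥Pb := Submodule.comap Pb.subtype (K.map π) with hKb
  -- the A-linear map from P to (Pb ⧸ Kb)
  have halg : (algebraMap A (A ⧸ J)) = π := Ideal.Quotient.algebraMap_eq J
  have hsur : Function.Surjective (algebraMap A (A ⧸ J)) := by
    rw [halg]; exact Ideal.Quotient.mk_surjective
  let g : ↥P →ₗ[A] (↥Pb ⧸ Kb) :=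
    { toFun := fun x => Submodule.Quotient.mk ⟨π x.1, Ideal.mem_map_of_mem π x.2⟩
      map_add' := fun x y => by
        rw [← Submodule.Quotient.mk_add]
        exact congrArg Submodule.Quotient.mk (Subtype.ext (map_add π x.1 y.1))
      map_smul' := fun a x => by
        rw [RingHom.id_apply, ← Submodule.Quotient.mk_smul]
        refine congrArg Submodule.Quotient.mk (Subtype.ext ?_)
        show π (a • x.1) = a • (π x.1)
        rw [smul_eq_mul, Algebra.smul_def, halg, map_mul] }
  have hgsur : Function.Surjective g := by
    intro w
    obtain ⟨⟨b, hb⟩, rfl⟩ := Submodule.Quotient.mk_surjective _ w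
    obtain ⟨x, hx, hxb⟩ := (Ideal.mem_map_iff_of_surjective π Ideal.Quotient.mk_surjective).mp hb
    exact ⟨⟨x, hx⟩, congrArg Submodule.Quotient.mk (Subtype.ext hxb)⟩
  have hker : LinearMap.ker g = Submodule.comap P.subtype (K ⊔ J) := by
    ext ⟨x, hx⟩
    simp only [LinearMap.mem_ker, Submodule.mem_comap]
    rw [show g ⟨x, hx⟩ = Submodule.Quotient.mk ⟨π x, Ideal.mem_map_of_mem π hx⟩ from rfl,
      Submodule.Quotient.mk_eq_zero]
    simp only [hKb, Submodule.mem_comap, Submodule.subtype_apply]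
    constructor
    · intro h
      obtain ⟨y, hy, hyx⟩ := (Ideal.mem_map_iff_of_surjective π Ideal.Quotient.mk_surjective).mp h
      have hsub : x - y ∈ J := by
        rw [← Ideal.Quotient.eq_zero_iff_mem, map_sub, hyx, sub_self]
      have : x = y + (x - y) := by ring
      rw [this]
      exact Submodule.add_mem_sup hy hsub
    · intro h
      obtain ⟨k, hk, j, hj, rfl⟩ := Submodule.mem_sup.mp h
      show π (k + j) ∈ K.map π
      rw [map_add, Ideal.Quotient.eq_zero_iff_mem.mpr hj, add_zero]
      exact Ideal.mem_map_of_mem π hk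
  have e : (↥P ⧸ Submodule.comap P.subtype (K ⊔ J)) ≃ₗ[A] (↥Pb ⧸ Kb) :=
    (Submodule.quotEquivOfEq _ _ hker.symm).trans (g.quotKerEquivOfSurjective hgsur)
  unfold qlen
  rw [Order.krullDim_eq_of_orderIso (restrictScalarsOrderIso A hsur),
    ← Order.krullDim_eq_of_orderIso (Submodule.orderIsoMapComap e)]

/-- `μ((I n + (a₁))/(a₁)) = μ(I n) - μ(I (n-1))`, stated additively; the left side is the
minimal number of generators of the image of `I n` in `A/(a₁)`. -/
theorem mu_image_quotient {A : Type*} [CommRing A] [IsNoetherianRing A] [IsLocalRing A]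
    (I : ℕ → Ideal A)
    (hI0 : I 0 = ⊤) (hmono : ∀ n, I (n + 1) ≤ I n) (hI1 : I 1 ≠ ⊤)
    (hmul : ∀ i j, I i * I j ≤ I (i + j))
    (a₁ : A) (ha₁ : a₁ ∈ I 1) (hreg : ∀ u : A, a₁ * u = 0 → u = 0)
    (hcap : ∀ n, 1 ≤ n → Ideal.span {a₁} ⊓ I n = Ideal.span {a₁} * I (n - 1))
    (hcap' : ∀ n, 1 ≤ n →
      Ideal.span {a₁} * I (n - 1) ⊓ IsLocalRing.maximalIdeal A * I n
        = Ideal.span {a₁} * (IsLocalRing.maximalIdeal A * I (n - 1)))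
    (hfin : ∀ m, qlen A (I m) (IsLocalRing.maximalIdeal A * I m) ≠ ⊤)
    (n : ℕ) (hn : 1 ≤ n) :
    qlen (A ⧸ Ideal.span {a₁})
        ((I n).map (Ideal.Quotient.mk (Ideal.span {a₁})))
        ((IsLocalRing.maximalIdeal A).map (Ideal.Quotient.mk (Ideal.span {a₁}))
          * (I n).map (Ideal.Quotient.mk (Ideal.span {a₁})))
      + qlen A (I (n - 1)) (IsLocalRing.maximalIdeal A * I (n - 1))
      = qlen A (I n) (IsLocalRing.maximalIdeal A * I n) := by
  set J := Ideal.span {a₁} with hJ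
  set 𝔪 := IsLocalRing.maximalIdeal A with h𝔪
  have hKIn : 𝔪 * I n ≤ I n := Ideal.mul_le_right
  have hJ1 : J ≤ I 1 := Ideal.span_le.mpr (Set.singleton_subset_iff.mpr ha₁)
  have hJm1 : J * I (n - 1) ≤ I n := by
    calc J * I (n - 1) ≤ I 1 * I (n - 1) := Ideal.mul_mono hJ1 le_rfl
      _ ≤ I (1 + (n - 1)) := hmul 1 (n - 1)
      _ = I n := by congr 1; omega
  have hTIn : 𝔪 * I n ⊔ J * I (n - 1) ≤ I n := sup_le hKIn hJm1
  have hmap : (𝔪.map (Ideal.Quotient.mk J)) * ((I n).map (Ideal.Quotient.mk J))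
      = (𝔪 * I n).map (Ideal.Quotient.mk J) := (Ideal.map_mul _ _ _).symm
  rw [hmap, qlen_map_quotient]
  have hinf : I n ⊓ (𝔪 * I n ⊔ J) = I n ⊓ (𝔪 * I n ⊔ J * I (n - 1)) := by
    rw [inf_comm, inf_comm (I n) (𝔪 * I n ⊔ J * I (n - 1)),
      sup_inf_assoc_of_le J hKIn, hcap n hn]
    exact (inf_eq_left.mpr hTIn).symm
  rw [qlen_eq_of_inf_eq hinf]
  have step1 : qlen A (I n) (𝔪 * I n)
      = qlen A (I n) (𝔪 * I n ⊔ J * I (n - 1)) + qlen A (𝔪 * I n ⊔ J * I (n - 1)) (𝔪 * I n) :=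
    qlen_add le_sup_left hTIn (hfin n)
  have step2 : qlen A (𝔪 * I n ⊔ J * I (n - 1)) (𝔪 * I n) = qlen A (I (n - 1)) (𝔪 * I (n - 1)) := by
    rw [sup_comm, qlen_sup, hcap' n hn, qlen_smul a₁ hreg Ideal.mul_le_right]
  rw [step2.symm, step1]
end

section
/- Let a ∈ I₁ be regular, and assume for all n with 1 ≤ n ≤ r−1 that aI_{n−1} ∩ 𝔪Iₙ = a𝔪I_{n−1} (with the relevant modules of finite length). Then λ(Iₙ/(𝔪Iₙ + aI_{n−1})) = μ(Iₙ) − μ(I_{n−1}) for 1 ≤ n ≤ r. Conversely, if λ(Iₙ/(𝔪Iₙ + aI_{n−1})) = μ(Iₙ) − μ(I_{n−1}) for 1 ≤ n ≤ r, then aI_{n−1} ∩ 𝔪Iₙ = a𝔪I_{n−1} for those n. -/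
open Order Submodule

section Mlen

variable {A : Type*} [Ring A] {M : Type*} [AddCommGroup M] [Module A M]

/-- Length of a module as Krull dimension of its submodule lattice. -/
noncomputable def mlen (A : Type*) [Ring A] (M : Type*) [AddCommGroup M] [Module A M] :
    WithBot ℕ∞ :=
  Order.krullDim (Submodule A M)

lemma mlen_congr {M' : Type*} [AddCommGroup M'] [Module A M'] (e : M ≃ₗ[A] M') :
    mlen A M = mlen A M' :=
  Order.krullDim_eq_of_orderIso (Submodule.orderIsoMapComap e)

lemma mlen_nonneg : 0 ≤ mlen A M := krullDim_nonneg

lemma mlen_dichotomy (N : Submodule A M) {x y : Submodule A M} (hxy : x < y) :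
    comap N.subtype x < comap N.subtype y ∨ map N.mkQ x < map N.mkQ y := by
  by_cases h : comap N.subtype x = comap N.subtype y
  · right
    have hinf : y ⊓ N ≤ x ⊓ N := by
      have h3 := congrArg (Submodule.map N.subtype) h
      rw [Submodule.map_comap_subtype, Submodule.map_comap_subtype] at h3
      rw [inf_comm y N, inf_comm x N, ← h3]
    have hsup := sup_lt_sup_of_lt_of_inf_le_inf hxy hinf
    refine lt_of_le_of_ne (Submodule.map_mono hxy.le) (fun hmap => ?_)
    have h2 := congrArg (comap N.mkQ) hmap
    rw [Submodule.comap_map_mkQ, Submodule.comap_map_mkQ, sup_comm N x, sup_comm N y] at h2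
    exact hsup.ne h2
  · left; exact lt_of_le_of_ne (comap_mono hxy.le) h

lemma mlen_length_le (N : Submodule A M) (p : LTSeries (Submodule A M)) :
    (p.length : ℕ∞) ≤
      Order.height (comap N.subtype p.last) + Order.height (map N.mkQ p.last) := by
  suffices H : ∀ (n : ℕ) (p : LTSeries (Submodule A M)), p.length = n →
      (p.length : ℕ∞) ≤
        Order.height (comap N.subtype p.last) + Order.height (map N.mkQ p.last) by
    exact H p.length p rfl
  intro n
  induction n with
  | zero => intro p hn; rw [hn]; simp
  | succ n ih =>
    intro p hn
    rw [hn]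
    have hq : p.eraseLast.length = n := by simp [hn]
    have hlt : p.eraseLast.last < p.last := p.eraseLast_last_rel_last (by omega)
    have IH := ih p.eraseLast hq
    rw [hq] at IH
    rcases mlen_dichotomy N hlt with h | h
    · by_cases htop : Order.height (comap N.subtype p.last) = ⊤
      · rw [htop]; simp
      · have hle : Order.height (comap N.subtype p.eraseLast.last)
            ≤ Order.height (comap N.subtype p.last) := Order.height_mono h.le
        have hstrict : Order.height (comap N.subtype p.eraseLast.last)
            < Order.height (comap N.subtype p.last) :=
          Order.height_strictMono h (lt_of_le_of_lt hle (lt_top_iff_ne_top.2 htop))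
        have h1 : Order.height (comap N.subtype p.eraseLast.last) + 1
            ≤ Order.height (comap N.subtype p.last) :=
          Order.add_one_le_of_lt hstrict
        have h2 : Order.height (map N.mkQ p.eraseLast.last)
            ≤ Order.height (map N.mkQ p.last) := Order.height_mono (Submodule.map_mono hlt.le)
        calc ((n + 1 : ℕ) : ℕ∞) = (n : ℕ∞) + 1 := by push_cast; ring
        _ ≤ (Order.height (comap N.subtype p.eraseLast.last)
              + Order.height (map N.mkQ p.eraseLast.last)) + 1 := by gcongr
        _ = (Order.height (comap N.subtype p.eraseLast.last) + 1)
              + Order.height (map N.mkQ p.eraseLast.last) := by ring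
        _ ≤ _ := by gcongr
    · by_cases htop : Order.height (map N.mkQ p.last) = ⊤
      · rw [htop]; simp
      · have hle : Order.height (map N.mkQ p.eraseLast.last)
            ≤ Order.height (map N.mkQ p.last) := Order.height_mono h.le
        have hstrict : Order.height (map N.mkQ p.eraseLast.last)
            < Order.height (map N.mkQ p.last) :=
          Order.height_strictMono h (lt_of_le_of_lt hle (lt_top_iff_ne_top.2 htop))
        have h1 : Order.height (map N.mkQ p.eraseLast.last) + 1
            ≤ Order.height (map N.mkQ p.last) := Order.add_one_le_of_lt hstrict
        have h2 : Order.height (comap N.subtype p.eraseLast.last)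
            ≤ Order.height (comap N.subtype p.last) :=
          Order.height_mono (Submodule.comap_mono hlt.le)
        calc ((n + 1 : ℕ) : ℕ∞) = (n : ℕ∞) + 1 := by push_cast; ring
        _ ≤ (Order.height (comap N.subtype p.eraseLast.last)
              + Order.height (map N.mkQ p.eraseLast.last)) + 1 := by gcongr
        _ = Order.height (comap N.subtype p.eraseLast.last)
              + (Order.height (map N.mkQ p.eraseLast.last) + 1) := by ring
        _ ≤ _ := by gcongr

end Mlen

section Mlen2

variable {A : Type*} [Ring A] {M : Type*} [AddCommGroup M] [Module A M]

lemma mlen_le_add (N : Submodule A M) : mlen A M ≤ mlen A N + mlen A (M ⧸ N) := by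
  rw [show mlen A M = ⨆ (p : LTSeries (Submodule A M)), (p.length : WithBot ℕ∞) from rfl]
  apply iSup_le
  intro p
  have h0 := mlen_length_le N p
  calc (p.length : WithBot ℕ∞)
      = ((p.length : ℕ∞) : WithBot ℕ∞) := by push_cast; rfl
    _ ≤ ((Order.height (comap N.subtype p.last) + Order.height (map N.mkQ p.last) : ℕ∞) :
          WithBot ℕ∞) := by exact_mod_cast h0
    _ = (Order.height (comap N.subtype p.last) : WithBot ℕ∞)
          + (Order.height (map N.mkQ p.last) : WithBot ℕ∞) := by push_cast; rfl
    _ ≤ mlen A N + mlen A (M ⧸ N) := by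
        exact add_le_add (Order.height_le_krullDim _) (Order.height_le_krullDim _)

lemma mlen_add_le (N : Submodule A M) : mlen A N + mlen A (M ⧸ N) ≤ mlen A M := by
  rw [mlen, mlen, mlen, krullDim_eq_iSup_length, krullDim_eq_iSup_length,
    krullDim_eq_iSup_length, ← WithBot.coe_add, WithBot.coe_le_coe]
  apply ENat.iSup_add_iSup_le
  intro q s
  set x : LTSeries (Submodule A M) :=
    q.map (Submodule.map N.subtype) (Submodule.map_strictMono_of_injective N.injective_subtype)
  set y : LTSeries (Submodule A M) :=
    s.map (Submodule.comap N.mkQ)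
      (Submodule.comap_strictMono_of_surjective (Submodule.mkQ_surjective N))
  have hxl : x.last ≤ N := Submodule.map_subtype_le N q.last
  have hyh : N ≤ y.head := by
    show N ≤ Submodule.comap N.mkQ s.head
    intro z hz
    simp only [Submodule.mem_comap, Submodule.mkQ_apply]
    rw [(Submodule.Quotient.mk_eq_zero N).2 hz]
    exact zero_mem _
  rcases eq_or_lt_of_le (hxl.trans hyh) with heq | hlt
  · refine le_iSup_of_le (x.smash y heq) ?_
    simp only [RelSeries.smash_length, LTSeries.map_length, x, y]
    norm_cast
  · refine le_iSup_of_le (x.append y hlt) ?_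
    simp only [RelSeries.append_length, LTSeries.map_length, x, y]
    norm_cast
    omega

lemma mlen_add (N : Submodule A M) : mlen A M = mlen A N + mlen A (M ⧸ N) :=
  le_antisymm (mlen_le_add N) (mlen_add_le N)

lemma mlen_eq_zero_of_subsingleton [Subsingleton M] : mlen A M = 0 :=
  le_antisymm krullDim_nonpos_of_subsingleton krullDim_nonneg

lemma subsingleton_of_mlen_le_zero (h : mlen A M ≤ 0) : Subsingleton M := by
  by_contra hs
  rw [not_subsingleton_iff_nontrivial] at hs
  obtain ⟨m, hm⟩ := exists_ne (0 : M)
  have hbt : (⊥ : Submodule A M) < ⊤ := by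
    refine lt_of_le_of_ne le_top fun hEq => hm ?_
    have : m ∈ (⊥ : Submodule A M) := by rw [hEq]; trivial
    simpa using this
  let p : LTSeries (Submodule A M) := (RelSeries.singleton _ ⊥).snoc ⊤ (by simpa using hbt)
  have hp := Order.LTSeries.length_le_krullDim p
  have hlen : p.length = 1 := rfl
  rw [hlen] at hp
  have h1 : (1 : WithBot ℕ∞) ≤ 0 := le_trans (by exact_mod_cast hp) h
  norm_num at h1

end Mlen2

section Qlen

variable {A : Type*} [CommRing A]

lemma qlen_eq_mlen (P Q : Submodule A A) :
    qlen A P Q = mlen A (↥P ⧸ Submodule.comap P.subtype Q) := rfl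

lemma qlen_nonneg (P Q : Submodule A A) : 0 ≤ qlen A P Q := mlen_nonneg

lemma qlen_ne_bot (P Q : Submodule A A) : qlen A P Q ≠ ⊥ := by
  intro h
  have := qlen_nonneg P Q
  rw [h] at this
  simp at this

lemma qlen_eq_zero_of_le {P Q : Submodule A A} (h : P ≤ Q) : qlen A P Q = 0 := by
  rw [qlen_eq_mlen]
  haveI : Subsingleton (↥P ⧸ Submodule.comap P.subtype Q) :=
    (Submodule.Quotient.subsingleton_iff).2 (Submodule.comap_subtype_eq_top.2 h)
  exact mlen_eq_zero_of_subsingleton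

lemma le_of_qlen_le_zero {P Q : Submodule A A} (h : qlen A P Q ≤ 0) : P ≤ Q := by
  rw [qlen_eq_mlen] at h
  have := subsingleton_of_mlen_le_zero h
  exact Submodule.comap_subtype_eq_top.1 ((Submodule.Quotient.subsingleton_iff).1 this)

lemma qlen_add_s9 {P Q R : Submodule A A} (hRQ : R ≤ Q) (hQP : Q ≤ P) :
    qlen A P R = qlen A Q R + qlen A P Q := by
  set U : Submodule A ↥P := Submodule.comap P.subtype R with hU
  set V : Submodule A ↥P := Submodule.comap P.subtype Q with hV
  have hUV : U ≤ V := Submodule.comap_mono hRQ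
  have h1 : mlen A (↥P ⧸ U) = mlen A (Submodule.map U.mkQ V)
      + mlen A ((↥P ⧸ U) ⧸ Submodule.map U.mkQ V) := mlen_add _
  have e2 : ((↥P ⧸ U) ⧸ Submodule.map U.mkQ V) ≃ₗ[A] (↥P ⧸ V) :=
    Submodule.quotientQuotientEquivQuotient U V hUV
  -- the middle term is `qlen A Q R`
  have hker : Submodule.comap V.subtype U = LinearMap.ker (U.mkQ ∘ₗ V.subtype) := by
    rw [LinearMap.ker_comp, Submodule.ker_mkQ]
  have hrange : LinearMap.range (U.mkQ ∘ₗ V.subtype) = Submodule.map U.mkQ V := by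
    rw [LinearMap.range_comp, Submodule.range_subtype]
  have e3 : (↥V ⧸ Submodule.comap V.subtype U) ≃ₗ[A] Submodule.map U.mkQ V :=
    (Submodule.quotEquivOfEq _ _ hker).trans
      (((U.mkQ ∘ₗ V.subtype).quotKerEquivRange).trans (LinearEquiv.ofEq _ _ hrange))
  have e4 : (↥Q ⧸ Submodule.comap Q.subtype R) ≃ₗ[A] (↥V ⧸ Submodule.comap V.subtype U) := by
    refine Submodule.Quotient.equiv _ _ (Submodule.comapSubtypeEquivOfLe hQP).symm ?_
    ext x
    set e := Submodule.comapSubtypeEquivOfLe hQP with he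
    simp only [Submodule.mem_map, Submodule.mem_comap, hU]
    constructor
    · rintro ⟨y, hy, rfl⟩
      have hco := Submodule.comapSubtypeEquivOfLe_apply_coe hQP (e.symm y)
      rw [← he, LinearEquiv.apply_symm_apply] at hco
      show ((e.symm y : ↥P) : A) ∈ R
      rw [← hco]
      exact hy
    · intro hx
      refine ⟨e x, ?_, LinearEquiv.symm_apply_apply e x⟩
      have hco := Submodule.comapSubtypeEquivOfLe_apply_coe hQP x
      rw [← he] at hco
      show ((e x : ↥Q) : A) ∈ R
      rw [hco]
      exact hx
  rw [qlen_eq_mlen, qlen_eq_mlen, qlen_eq_mlen, h1, mlen_congr e2, mlen_congr e4, mlen_congr e3]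

lemma qlen_sup_s9 (P Q : Submodule A A) : qlen A (P ⊔ Q) Q = qlen A P (P ⊓ Q) :=
  (mlen_congr (LinearMap.quotientInfEquivSupQuotient P Q)).symm

end Qlen

section Reg

variable {A : Type*} [CommRing A]

/-- Multiplication by a regular element as a linear equivalence `J ≃ a*J`. -/
noncomputable def mulRegEquiv {a : A} (hreg : ∀ u : A, a * u = 0 → u = 0) (J : Ideal A) :
    ↥J ≃ₗ[A] ↥(Ideal.span {a} * J) := by
  refine LinearEquiv.ofBijective
    { toFun := fun x => ⟨a * (x : A),
        Ideal.mul_mem_mul (Submodule.mem_span_singleton_self a) x.2⟩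
      map_add' := by intro x y; ext; simp [mul_add]
      map_smul' := by intro c x; ext; simp; ring } ⟨?_, ?_⟩
  · intro x y hxy
    have h1 : a * (x : A) = a * (y : A) := by
      have := congrArg (fun z : ↥(Ideal.span {a} * J) => (z : A)) hxy
      simpa using this
    ext
    have h2 := hreg ((x : A) - (y : A)) (by rw [mul_sub, h1, sub_self])
    exact sub_eq_zero.1 h2
  · rintro ⟨z, hz⟩
    obtain ⟨y, hy, hyz⟩ := Ideal.mem_span_singleton_mul.1 hz
    exact ⟨⟨y, hy⟩, by ext; simpa using hyz⟩

lemma qlen_mul_regular {a : A} (hreg : ∀ u : A, a * u = 0 → u = 0) {J T : Ideal A} (hT : T ≤ J) :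
    qlen A (Ideal.span {a} * J) (Ideal.span {a} * T) = qlen A J T := by
  symm
  rw [qlen_eq_mlen, qlen_eq_mlen]
  refine mlen_congr (Submodule.Quotient.equiv _ _ (mulRegEquiv hreg J) ?_)
  ext x
  simp only [Submodule.mem_map, Submodule.mem_comap]
  constructor
  · rintro ⟨y, hy, rfl⟩
    show a * (y : A) ∈ Ideal.span {a} * T
    exact Ideal.mul_mem_mul (Submodule.mem_span_singleton_self a) hy
  · intro hx
    have hx' : (x : A) ∈ Ideal.span {a} * T := hx
    obtain ⟨y, hy, hyx⟩ := Ideal.mem_span_singleton_mul.1 hx'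
    refine ⟨⟨y, hT hy⟩, hy, ?_⟩
    ext
    exact hyx

end Reg

section Core

variable {A : Type*} [CommRing A]

lemma fin_parts {u v x : WithBot ℕ∞} (hu : u ≠ ⊥) (hv : v ≠ ⊥) (hx : x ≠ ⊤)
    (h : u + v = x) : u ≠ ⊤ ∧ v ≠ ⊤ := by
  lift u to ℕ∞ using hu
  lift v to ℕ∞ using hv
  constructor
  · intro htop
    apply hx
    rw [← h, htop, show (⊤ : WithBot ℕ∞) = ((⊤ : ℕ∞) : WithBot ℕ∞) from rfl,
      ← WithBot.coe_add, top_add]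
  · intro htop
    apply hx
    rw [← h, htop, show (⊤ : WithBot ℕ∞) = ((⊤ : ℕ∞) : WithBot ℕ∞) from rfl,
      ← WithBot.coe_add, add_top]

lemma exists_nat_of {q : WithBot ℕ∞} (hb : q ≠ ⊥) (ht : q ≠ ⊤) :
    ∃ n : ℕ, q = (n : WithBot ℕ∞) := by
  lift q to ℕ∞ using hb
  have ht' : q ≠ ⊤ := fun h => ht (by rw [h]; rfl)
  lift q to ℕ using ht'
  exact ⟨q, rfl⟩

variable (m : Ideal A) {a : A} (hreg : ∀ u : A, a * u = 0 → u = 0) (J K : Ideal A)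
  (hSJK : Ideal.span {a} * J ≤ K)

include hSJK hreg

lemma core_facts :
    qlen A K (m * K) =
      qlen A (Ideal.span {a} * J) (Ideal.span {a} * J ⊓ m * K)
        + qlen A K (m * K ⊔ Ideal.span {a} * J) ∧
    qlen A J (m * J) =
      qlen A (Ideal.span {a} * J ⊓ m * K) (Ideal.span {a} * (m * J))
        + qlen A (Ideal.span {a} * J) (Ideal.span {a} * J ⊓ m * K) := by
  have hmK_K : m * K ≤ K := Ideal.mul_le_right
  have hSmJ_SJ : Ideal.span {a} * (m * J) ≤ Ideal.span {a} * J :=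
    Ideal.mul_mono_right Ideal.mul_le_right
  have hSmJ_mK : Ideal.span {a} * (m * J) ≤ m * K := by
    rw [mul_left_comm]
    exact Ideal.mul_mono_right hSJK
  have hSmJ_inf : Ideal.span {a} * (m * J) ≤ Ideal.span {a} * J ⊓ m * K :=
    le_inf hSmJ_SJ hSmJ_mK
  have h1 : qlen A K (m * K) = qlen A (m * K ⊔ Ideal.span {a} * J) (m * K)
      + qlen A K (m * K ⊔ Ideal.span {a} * J) :=
    qlen_add_s9 le_sup_left (sup_le hmK_K hSJK)
  have h2 : qlen A (m * K ⊔ Ideal.span {a} * J) (m * K)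
      = qlen A (Ideal.span {a} * J) (Ideal.span {a} * J ⊓ m * K) := by
    rw [sup_comm]
    exact qlen_sup_s9 _ _
  have h3 : qlen A (Ideal.span {a} * J) (Ideal.span {a} * (m * J)) = qlen A J (m * J) :=
    qlen_mul_regular hreg Ideal.mul_le_right
  have h4 : qlen A (Ideal.span {a} * J) (Ideal.span {a} * (m * J))
      = qlen A (Ideal.span {a} * J ⊓ m * K) (Ideal.span {a} * (m * J))
        + qlen A (Ideal.span {a} * J) (Ideal.span {a} * J ⊓ m * K) :=
    qlen_add_s9 hSmJ_inf inf_le_left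
  exact ⟨by rw [h1, h2], by rw [← h3, h4]⟩

lemma core_forward
    (heq : Ideal.span {a} * J ⊓ m * K = Ideal.span {a} * (m * J)) :
    qlen A K (m * K ⊔ Ideal.span {a} * J) + qlen A J (m * J) = qlen A K (m * K) := by
  obtain ⟨h1, h2⟩ := core_facts m hreg J K hSJK
  have hz : qlen A (Ideal.span {a} * J ⊓ m * K) (Ideal.span {a} * (m * J)) = 0 :=
    qlen_eq_zero_of_le heq.le
  rw [hz, zero_add] at h2
  rw [h1, h2, add_comm]

lemma core_backward
    (hlen : qlen A K (m * K ⊔ Ideal.span {a} * J) + qlen A J (m * J) = qlen A K (m * K))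
    (hx : qlen A K (m * K) ≠ ⊤) (hz : qlen A J (m * J) ≠ ⊤) :
    Ideal.span {a} * J ⊓ m * K = Ideal.span {a} * (m * J) := by
  obtain ⟨h1, h2⟩ := core_facts m hreg J K hSJK
  have hSmJ_inf : Ideal.span {a} * (m * J) ≤ Ideal.span {a} * J ⊓ m * K := by
    refine le_inf (Ideal.mul_mono_right Ideal.mul_le_right) ?_
    rw [mul_left_comm]
    exact Ideal.mul_mono_right hSJK
  have ⟨hwt, hyt⟩ := fin_parts (qlen_ne_bot _ _) (qlen_ne_bot _ _) hx h1.symm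
  have ⟨hdt, _⟩ := fin_parts (qlen_ne_bot _ _) (qlen_ne_bot _ _) hz h2.symm
  obtain ⟨nw, hnw⟩ := exists_nat_of (qlen_ne_bot _ _) hwt
  obtain ⟨ny, hny⟩ := exists_nat_of (qlen_ne_bot _ _) hyt
  obtain ⟨nd, hnd⟩ := exists_nat_of (qlen_ne_bot _ _) hdt
  have key : qlen A K (m * K ⊔ Ideal.span {a} * J)
      + (qlen A (Ideal.span {a} * J ⊓ m * K) (Ideal.span {a} * (m * J))
          + qlen A (Ideal.span {a} * J) (Ideal.span {a} * J ⊓ m * K))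
      = qlen A (Ideal.span {a} * J) (Ideal.span {a} * J ⊓ m * K)
          + qlen A K (m * K ⊔ Ideal.span {a} * J) := by
    rw [← h2, hlen, h1]
  rw [hnw, hny, hnd] at key
  have key2 : ((ny + (nd + nw) : ℕ) : WithBot ℕ∞) = ((nw + ny : ℕ) : WithBot ℕ∞) := by
    push_cast
    exact key
  have key3 : ny + (nd + nw) = nw + ny := by exact_mod_cast key2
  have hnd0 : nd = 0 := by omega
  refine le_antisymm ?_ hSmJ_inf
  apply le_of_qlen_le_zero
  rw [hnd, hnd0]
  simp

end Core

/-- Equivalence `(4) ⟺ (5)`: for `1 ≤ n ≤ r-1`, `a I (n-1) ⊓ 𝔪 I n = a 𝔪 I (n-1)` implies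
`λ(I n/(𝔪 I n + a I (n-1))) = μ(I n) - μ(I (n-1))` for `1 ≤ n ≤ r`, and conversely. -/
theorem intersections_iff_lengths {A : Type*} [CommRing A] [IsNoetherianRing A]
    [IsLocalRing A]
    (I : ℕ → Ideal A)
    (hI0 : I 0 = ⊤) (hmono : ∀ n, I (n + 1) ≤ I n) (hI1 : I 1 ≠ ⊤)
    (hmul : ∀ i j, I i * I j ≤ I (i + j))
    (a : A) (ha : a ∈ I 1) (hreg : ∀ u : A, a * u = 0 → u = 0)
    (r : ℕ) (hr : 1 ≤ r)
    (hred : ∀ n, r ≤ n → I n = Ideal.span {a} * I (n - 1))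
    (hfin : ∀ m, qlen A (I m) (IsLocalRing.maximalIdeal A * I m) ≠ ⊤) :
    ((∀ n, 1 ≤ n → n ≤ r - 1 →
        Ideal.span {a} * I (n - 1) ⊓ IsLocalRing.maximalIdeal A * I n
          = Ideal.span {a} * (IsLocalRing.maximalIdeal A * I (n - 1))) →
      ∀ n, 1 ≤ n → n ≤ r →
        qlen A (I n) (IsLocalRing.maximalIdeal A * I n ⊔ Ideal.span {a} * I (n - 1))
            + qlen A (I (n - 1)) (IsLocalRing.maximalIdeal A * I (n - 1))
          = qlen A (I n) (IsLocalRing.maximalIdeal A * I n)) ∧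
    ((∀ n, 1 ≤ n → n ≤ r →
        qlen A (I n) (IsLocalRing.maximalIdeal A * I n ⊔ Ideal.span {a} * I (n - 1))
            + qlen A (I (n - 1)) (IsLocalRing.maximalIdeal A * I (n - 1))
          = qlen A (I n) (IsLocalRing.maximalIdeal A * I n)) →
      ∀ n, 1 ≤ n → n ≤ r →
        Ideal.span {a} * I (n - 1) ⊓ IsLocalRing.maximalIdeal A * I n
          = Ideal.span {a} * (IsLocalRing.maximalIdeal A * I (n - 1))) := by
  have hSJK : ∀ n, 1 ≤ n → Ideal.span {a} * I (n - 1) ≤ I n := by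
    intro n hn
    have h1a : Ideal.span {a} ≤ I 1 := (Ideal.span_singleton_le_iff_mem _).2 ha
    calc Ideal.span {a} * I (n - 1) ≤ I 1 * I (n - 1) := Ideal.mul_mono_left h1a
      _ ≤ I (1 + (n - 1)) := hmul 1 (n - 1)
      _ = I n := by congr 1; omega
  constructor
  · intro hint n hn1 hnr
    refine core_forward (IsLocalRing.maximalIdeal A) hreg (I (n-1)) (I n) (hSJK n hn1) ?_
    rcases lt_or_eq_of_le hnr with hlt | hEq
    · exact hint n hn1 (by omega)
    · subst hEq
      have hKeq : I n = Ideal.span {a} * I (n - 1) := hred n le_rfl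
      calc Ideal.span {a} * I (n - 1) ⊓ IsLocalRing.maximalIdeal A * I n
          = I n ⊓ IsLocalRing.maximalIdeal A * I n := by rw [← hKeq]
        _ = IsLocalRing.maximalIdeal A * I n := inf_eq_right.2 Ideal.mul_le_right
        _ = IsLocalRing.maximalIdeal A * (Ideal.span {a} * I (n - 1)) := by rw [← hKeq]
        _ = Ideal.span {a} * (IsLocalRing.maximalIdeal A * I (n - 1)) := by
            rw [mul_left_comm]
  · intro hlen n hn1 hnr
    exact core_backward (IsLocalRing.maximalIdeal A) hreg (I (n-1)) (I n) (hSJK n hn1)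
      (hlen n hn1 hnr) (hfin n) (hfin (n-1))
end

section
/- Let J ⊆ I₁ be an ideal with J ∩ Iₙ = J·I_{n−1} for all n ≥ 1. Then for all n ≥ 1 there is an isomorphism of A-modules ((I_{n+1} + J) : 𝔪) ∩ Iₙ + J)/(I_{n+1} + J) ≅ (((I_{n+1} + J) : 𝔪) ∩ Iₙ)/(I_{n+1} + J·I_{n−1}). -/
/-- The second-isomorphism-theorem identification
`(((I (n+1) + J) : 𝔪) ∩ I n + J)/(I (n+1) + J) ≅ (((I (n+1) + J) : 𝔪) ∩ I n)/(I (n+1) + J I (n-1))`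
when `J ∩ I n = J I (n-1)` for all `n ≥ 1`. -/
theorem canonical_module_graded_piece_iso {A : Type*} [CommRing A] [IsNoetherianRing A]
    [IsLocalRing A]
    (I : ℕ → Ideal A)
    (hI0 : I 0 = ⊤) (hmono : ∀ n, I (n + 1) ≤ I n)
    (J : Ideal A) (hJ : J ≤ I 1)
    (hcap : ∀ n, 1 ≤ n → J ⊓ I n = J * I (n - 1)) :
    ∀ n, 1 ≤ n →
    Nonempty
      ((↥((((I (n + 1) ⊔ J).colon (IsLocalRing.maximalIdeal A)) ⊓ I n) ⊔ J) ⧸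
          Submodule.comap
            ((((I (n + 1) ⊔ J).colon (IsLocalRing.maximalIdeal A)) ⊓ I n) ⊔ J).subtype
            (I (n + 1) ⊔ J))
        ≃ₗ[A]
       (↥(((I (n + 1) ⊔ J).colon (IsLocalRing.maximalIdeal A)) ⊓ I n) ⧸
          Submodule.comap
            ((((I (n + 1) ⊔ J).colon (IsLocalRing.maximalIdeal A)) ⊓ I n)).subtype
            (I (n + 1) ⊔ J * I (n - 1)))) := by
  intro n hn
  set 𝔪 := IsLocalRing.maximalIdeal A
  set L : Ideal A := I (n + 1) ⊔ J with hL
  set K : Ideal A := L.colon 𝔪 ⊓ I n with hK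
  have hLcolon : L ≤ L.colon 𝔪 := by
    intro x hx
    rw [Submodule.mem_colon]
    intro p hp
    exact Ideal.mul_mem_right p L hx
  have hIK : I (n + 1) ≤ K := le_inf (le_trans le_sup_left hLcolon) (hmono n)
  have hJL : J * I (n - 1) ≤ L.colon 𝔪 :=
    le_trans (le_trans Ideal.mul_le_left (le_trans le_sup_right hLcolon))
      (le_refl _)
  have hsup : K ⊔ L = K ⊔ J := by
    rw [hL, ← sup_assoc, sup_eq_left.2 hIK]
  have hinf : K ⊓ L = I (n + 1) ⊔ J * I (n - 1) := by
    have h1 : K ⊓ J = J * I (n - 1) := by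
      have : K ⊓ J = L.colon 𝔪 ⊓ (J ⊓ I n) := by
        rw [hK, inf_assoc, inf_comm (I n) J]
      rw [this, hcap n hn, inf_eq_right.2 hJL]
    rw [hL, sup_comm (I (n+1)) J, ← inf_sup_assoc_of_le _ hIK, h1, sup_comm]
  rw [← hsup, ← hinf]
  exact ⟨(LinearMap.quotientInfEquivSupQuotient K L).symm⟩
end

section
/- Let 𝔉 = (Iₙ) be a Noetherian filtration such that the Rees algebra R(𝔉) is a finite module over R(I₁). Then an ideal J ⊆ I₁ is a reduction of 𝔉 (i.e., JIₙ = I_{n+1} for all sufficiently large n) if and only if J is a reduction of the ideal I₁ (i.e., J(I₁)ⁿ = (I₁)^{n+1} for all sufficiently large n). -/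
open Polynomial

private lemma pow_eq_of_red {A : Type*} [CommRing A] {J I1 : Ideal A} {N' : ℕ}
    (h : ∀ n ≥ N', J * I1 ^ n = I1 ^ (n + 1)) :
    ∀ t, I1 ^ (N' + t) = J ^ t * I1 ^ N' := by
  intro t
  induction t with
  | zero => simp
  | succ t ih =>
      have h1 : I1 ^ (N' + t + 1) = J * I1 ^ (N' + t) := (h (N' + t) (by omega)).symm
      rw [show N' + (t + 1) = N' + t + 1 by ring, h1, ih, pow_succ]
      ring

/-- For a Noetherian filtration with `R(𝔉)` finite over `R(I 1)` (equivalently,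
`I n ⊆ (I 1)^(n-k)` for some `k` and all `n`), an ideal `J ⊆ I 1` is a reduction of the
filtration iff it is a reduction of the ideal `I 1`. -/
theorem reduction_filtration_iff_reduction_ideal {A : Type*} [CommRing A]
    [IsNoetherianRing A] [IsLocalRing A]
    (I : ℕ → Ideal A)
    (hI0 : I 0 = ⊤) (hmono : ∀ n, I (n + 1) ≤ I n) (hI1 : I 1 ≠ ⊤)
    (hmul : ∀ i j, I i * I j ≤ I (i + j))
    (hfin : ∃ k : ℕ, ∀ n, I n ≤ I 1 ^ (n - k))
    (J : Ideal A) (hJ : J ≤ I 1) :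
    (∃ N, ∀ n ≥ N, J * I n = I (n + 1)) ↔ (∃ N, ∀ n ≥ N, J * I 1 ^ n = I 1 ^ (n + 1)) := by
  classical
  obtain ⟨k, hk⟩ := hfin
  -- the powers of `I 1` are contained in the filtration
  have hpow_le : ∀ n, I 1 ^ n ≤ I n := by
    intro n
    induction n with
    | zero => simp [hI0]
    | succ n ih =>
        calc I 1 ^ (n + 1) = I 1 ^ n * I 1 := pow_succ _ _
          _ ≤ I n * I 1 := Ideal.mul_mono_left ih
          _ ≤ I (n + 1) := hmul n 1
  have hJIn : ∀ n, J • I n ≤ I (n + 1) := fun n => by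
    rw [Ideal.smul_eq_mul]
    calc J * I n ≤ I 1 * I n := Ideal.mul_mono_left hJ
      _ ≤ I (1 + n) := hmul 1 n
      _ = I (n + 1) := by rw [add_comm]
  -- the filtration itself, as a `J`-filtration
  let FI : J.Filtration A := ⟨fun n => I n, hmono, hJIn⟩
  -- the `I 1`-adic filtration, as a `J`-filtration
  let FP : J.Filtration A :=
    ⟨fun n => I 1 ^ n, fun n => Ideal.pow_le_pow_right (by omega), fun n => by
      show J • I 1 ^ n ≤ I 1 ^ (n + 1)
      rw [Ideal.smul_eq_mul, pow_succ, mul_comm]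
      exact Ideal.mul_mono_right hJ⟩
  constructor
  · -- forward: `J` reduction of the filtration ⇒ reduction of `I 1`
    rintro ⟨N, hN⟩
    have hFI : FI.Stable := ⟨N, fun n hn => by
      show J • I n = I (n + 1)
      rw [Ideal.smul_eq_mul]; exact hN n hn⟩
    obtain ⟨D, hD⟩ := hFI.of_le (F' := FP) (fun n => hpow_le n)
    refine ⟨D, fun n hn => ?_⟩
    have := hD n hn
    rwa [show FP.N n = I 1 ^ n from rfl, show FP.N (n + 1) = I 1 ^ (n + 1) from rfl,
      Ideal.smul_eq_mul] at this
  · -- backward: `J` reduction of `I 1` ⇒ reduction of the filtration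
    rintro ⟨N', hN'⟩
    set c := k + N' with hc
    -- bounding stable filtration `E n = J ^ (n - c) * (I 1) ^ (min n c - k)`
    have hEmono : ∀ n : ℕ,
        J ^ (n + 1 - c) * I 1 ^ (min (n + 1) c - k) ≤ J ^ (n - c) * I 1 ^ (min n c - k) := by
      intro n
      rcases le_or_gt (n + 1) c with h | h
      · rw [show n + 1 - c = 0 by omega, show n - c = 0 by omega,
          show min (n + 1) c = n + 1 by omega, show min n c = n by omega]
        exact Ideal.mul_mono_right (Ideal.pow_le_pow_right (by omega))
      · rw [show min (n + 1) c = c by omega, show min n c = c by omega]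
        exact Ideal.mul_mono_left (Ideal.pow_le_pow_right (by omega))
    have hEsmul : ∀ n : ℕ,
        J • (J ^ (n - c) * I 1 ^ (min n c - k)) ≤ J ^ (n + 1 - c) * I 1 ^ (min (n + 1) c - k) := by
      intro n
      rw [Ideal.smul_eq_mul]
      rcases le_or_gt c n with h | h
      · rw [show min n c = c by omega, show min (n + 1) c = c by omega,
          show n + 1 - c = (n - c) + 1 by omega, ← mul_assoc, ← pow_succ']
      · rw [show n - c = 0 by omega, show n + 1 - c = 0 by omega,
          show min n c = n by omega, show min (n + 1) c = n + 1 by omega,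
          pow_zero, one_mul, one_mul]
        calc J * I 1 ^ (n - k) ≤ I 1 * I 1 ^ (n - k) := Ideal.mul_mono_left hJ
          _ = I 1 ^ (n - k + 1) := (pow_succ' _ _).symm
          _ ≤ I 1 ^ (n + 1 - k) := Ideal.pow_le_pow_right (by omega)
    let FE : J.Filtration A := ⟨fun n => J ^ (n - c) * I 1 ^ (min n c - k), hEmono, hEsmul⟩
    have hFE : FE.Stable := by
      refine ⟨c, fun n hn => ?_⟩
      show J • (J ^ (n - c) * I 1 ^ (min n c - k))
          = J ^ (n + 1 - c) * I 1 ^ (min (n + 1) c - k)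
      rw [Ideal.smul_eq_mul, show min n c = c by omega, show min (n + 1) c = c by omega,
        show n + 1 - c = (n - c) + 1 by omega, ← mul_assoc, ← pow_succ']
    have hle : FI ≤ FE := by
      intro n
      show I n ≤ J ^ (n - c) * I 1 ^ (min n c - k)
      rcases le_or_gt n c with h | h
      · rw [show n - c = 0 by omega, show min n c = n by omega, pow_zero, one_mul]
        exact hk n
      · rw [show min n c = c by omega]
        have h1 : I n ≤ I 1 ^ (n - k) := hk n
        have h2 : I 1 ^ (n - k) = J ^ (n - c) * I 1 ^ N' := by
          have := pow_eq_of_red hN' (n - c)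
          rwa [show N' + (n - c) = n - k by omega] at this
        rw [show c - k = N' by omega]
        exact h1.trans (le_of_eq h2)
    obtain ⟨D, hD⟩ := hFE.of_le hle
    refine ⟨D, fun n hn => ?_⟩
    have := hD n hn
    rwa [show FI.N n = I n from rfl, show FI.N (n + 1) = I (n + 1) from rfl,
      Ideal.smul_eq_mul] at this
end
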